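/- arXiv:2511.13547 — 2 statements merged into one kernel-verified Lean document; each statement's English description precedes it below -/
import Mathlib

section
/- Let 𝕋 be a pretheory. If f : X → Y and g : Y → Z are context morphisms, then the composite g∘f, whose i-th entry is gᵢ[f], is a context morphism from X to Z. -/
set_option linter.unusedVariables false

/-! # Syntax of generalized algebraic theories (following Cartmell / the paper's appendix) -/

namespace GATPaper

/-- A sort-and-term alphabet: a countably infinite set of variables, a set of sort
symbols and a set of term symbols. -/
structure Alphabet : Type 1 where
  Var : Type
  SortSym : Type
  TermSym : Type
  var_infinite : Infinite Var
  var_countable : Countable Var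

attribute [instance] Alphabet.var_infinite Alphabet.var_countable

variable {A B : Alphabet}

/-- Term expressions over an alphabet. -/
inductive Expr (A : Alphabet) : Type where
  | var : A.Var → Expr A
  | app : A.TermSym → List (Expr A) → Expr A

/-- Sort expressions: a sort symbol applied to a list of term expressions. -/
structure SortE (A : Alphabet) : Type where
  head : A.SortSym
  args : List (Expr A)

/-- Occurrence of a variable in a term expression. -/
inductive Occurs (x : A.Var) : Expr A → Prop where
  | var : Occurs x (Expr.var x)
  | app {t : A.TermSym} {es : List (Expr A)} {e : Expr A} :
      e ∈ es → Occurs x e → Occurs x (Expr.app t es)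

/-- Occurrence of a variable in a sort expression. -/
def SOccurs (x : A.Var) (U : SortE A) : Prop := ∃ e ∈ U.args, Occurs x e

/-- Simultaneous substitution along a function on variables. -/
def Expr.subst (σ : A.Var → Expr A) : Expr A → Expr A
  | .var x => σ x
  | .app t es => .app t (es.attach.map fun e => Expr.subst σ e.1)
termination_by e => sizeOf e
decreasing_by
  have := List.sizeOf_lt_of_mem e.2
  simp only [Expr.app.sizeOf_spec]
  omega

def SortE.subst (σ : A.Var → Expr A) (U : SortE A) : SortE A :=
  ⟨U.head, U.args.map (Expr.subst σ)⟩

open Classical in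
/-- The function on variables determined by a finite list of substitution pairs
`(zᵢ, uᵢ)` (substituting `uᵢ` for `zᵢ`, first matching pair winning, all other
variables unchanged). -/
noncomputable def lookupV : List (A.Var × Expr A) → A.Var → Expr A
  | [], x => .var x
  | p :: ps, x => if p.1 = x then p.2 else lookupV ps x

/-- The simultaneous substitution `e[u₁ | z₁, …, u_k | z_k]` where
`ps = [(z₁,u₁),…,(z_k,u_k)]`. -/
noncomputable def Expr.substL (e : Expr A) (ps : List (A.Var × Expr A)) : Expr A :=
  e.subst (lookupV ps)

noncomputable def SortE.substL (U : SortE A) (ps : List (A.Var × Expr A)) : SortE A :=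
  U.subst (lookupV ps)

/-- A (pre)context is a finite list of (variable, sort expression) pairs. -/
abbrev PreCtx (A : Alphabet) := List (A.Var × SortE A)

/-- The list of variables of a precontext, as term expressions. -/
def ctxVars (X : PreCtx A) : List (Expr A) := X.map fun p => Expr.var p.1

/-- The scoping condition of a precontext: the `i`-th sort expression only contains
variables among the first `i` variables. -/
def IsPreCtx (X : PreCtx A) : Prop :=
  ∀ i (hi : i < X.length) (v : A.Var),
    SOccurs v (X[i]'hi).2 → v ∈ (X.take i).map Prod.fst

/-- Substitution pairs sending the variables of `X` to the entries of `f`. -/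
def mkSub (X : PreCtx A) (f : List (Expr A)) : List (A.Var × Expr A) :=
  (X.map Prod.fst).zip f

/-- `Xᵢ[f₁ | x₁, …, f_{i-1} | x_{i-1}]` (0-based: the `i`-th sort of `X`
substituted along the first `i` entries of `f`). -/
noncomputable def subPre (X : PreCtx A) (f : List (Expr A)) (i : ℕ) (hi : i < X.length) :
    SortE A :=
  ((X[i]'hi).2).substL (mkSub (X.take i) (f.take i))

/-- Judgments: context judgments and the four kinds of standard judgments. -/
inductive Judg (A : Alphabet) : Type where
  | ctx (X : PreCtx A)
  | sort (X : PreCtx A) (U : SortE A)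
  | term (X : PreCtx A) (u : Expr A) (U : SortE A)
  | sortEq (X : PreCtx A) (U V : SortE A)
  | termEq (X : PreCtx A) (u v : Expr A) (U : SortE A)

/-- The context of a judgment. -/
def Judg.ctxOf : Judg A → PreCtx A
  | .ctx X => X
  | .sort X _ => X
  | .term X _ _ => X
  | .sortEq X _ _ => X
  | .termEq X _ _ _ => X

/-- The judgment introducing a sort symbol over the context `X`. -/
def introSort (X : PreCtx A) (S : A.SortSym) : Judg A := .sort X ⟨S, ctxVars X⟩

/-- The judgment introducing a term symbol over the context `X`, with sort `U`. -/
def introTerm (X : PreCtx A) (t : A.TermSym) (U : SortE A) : Judg A :=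
  .term X (.app t (ctxVars X)) U

/-- A set of axioms is a pretheory if: no axiom is a context judgment, every
axiom's context is a precontext, every sort symbol has a unique introducing sort
axiom and there are no other sort axioms, and likewise for term symbols. -/
structure IsPretheory (Ax : Set (Judg A)) : Prop where
  no_ctx : ∀ X : PreCtx A, Judg.ctx X ∉ Ax
  wf_ctx : ∀ J ∈ Ax, IsPreCtx J.ctxOf
  sort_intro : ∀ S : A.SortSym, ∃! X : PreCtx A, introSort X S ∈ Ax
  sort_shape : ∀ (X : PreCtx A) (U : SortE A), Judg.sort X U ∈ Ax → U.args = ctxVars X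
  term_intro : ∀ t : A.TermSym, ∃! p : PreCtx A × SortE A, introTerm p.1 t p.2 ∈ Ax
  term_shape : ∀ (X : PreCtx A) (u : Expr A) (U : SortE A), Judg.term X u U ∈ Ax →
      ∃ t : A.TermSym, u = Expr.app t (ctxVars X)

/-- One inference step of the paper's system: `Step Ax D J` holds when `J` is the
conclusion of an instance of one of the sixteen rules all of whose premises
satisfy `D`. -/
inductive Step (Ax : Set (Judg A)) (D : Judg A → Prop) : Judg A → Prop where
  | ctx_nil : Step Ax D (.ctx [])
  | ctx_cons {X : PreCtx A} {U : SortE A} {x : A.Var}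
      (hs : D (.sort X U)) (hfresh : ∀ p ∈ X, p.1 ≠ x)
      (hpre : IsPreCtx (X ++ [(x, U)])) :
      Step Ax D (.ctx (X ++ [(x, U)]))
  | s1 {X : PreCtx A} {U : SortE A} (h : D (.sort X U)) : Step Ax D (.sortEq X U U)
  | s2 {X : PreCtx A} {U V : SortE A} (h : D (.sortEq X U V)) : Step Ax D (.sortEq X V U)
  | s3 {X : PreCtx A} {U V W : SortE A}
      (h1 : D (.sortEq X U V)) (h2 : D (.sortEq X V W)) : Step Ax D (.sortEq X U W)
  | t1 {X : PreCtx A} {u : Expr A} {U : SortE A}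
      (h : D (.term X u U)) : Step Ax D (.termEq X u u U)
  | t2 {X : PreCtx A} {u v : Expr A} {U : SortE A}
      (h : D (.termEq X u v U)) : Step Ax D (.termEq X v u U)
  | t3 {X : PreCtx A} {u v w : Expr A} {U : SortE A}
      (h1 : D (.termEq X u v U)) (h2 : D (.termEq X v w U)) : Step Ax D (.termEq X u w U)
  | seqt {X : PreCtx A} {U U' : SortE A} {u : Expr A}
      (h1 : D (.sortEq X U U')) (h2 : D (.term X u U)) : Step Ax D (.term X u U')
  | seqteq {X : PreCtx A} {U U' : SortE A} {u u' : Expr A}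
      (h1 : D (.sortEq X U U')) (h2 : D (.termEq X u u' U))
      (h3 : D (.term X u U')) (h4 : D (.term X u' U')) : Step Ax D (.termEq X u u' U')
  | var {X : PreCtx A} {i : ℕ} (hi : i < X.length)
      (h : D (.sort X (X[i]'hi).2)) :
      Step Ax D (.term X (.var (X[i]'hi).1) (X[i]'hi).2)
  | sA {X : PreCtx A} {U : SortE A} (hax : Judg.sort X U ∈ Ax) (h : D (.ctx X))
      (hv : ∀ i (hi : i < X.length), D (.term X (.var (X[i]'hi).1) (X[i]'hi).2)) :
      Step Ax D (.sort X U)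
  | tA {X : PreCtx A} {u : Expr A} {U : SortE A} (hax : Judg.term X u U ∈ Ax)
      (h : D (.sort X U))
      (hv : ∀ i (hi : i < X.length), D (.term X (.var (X[i]'hi).1) (X[i]'hi).2)) :
      Step Ax D (.term X u U)
  | seqA {X : PreCtx A} {U U' : SortE A} (hax : Judg.sortEq X U U' ∈ Ax)
      (h1 : D (.sort X U)) (h2 : D (.sort X U')) : Step Ax D (.sortEq X U U')
  | teqA {X : PreCtx A} {u u' : Expr A} {U : SortE A} (hax : Judg.termEq X u u' U ∈ Ax)
      (h1 : D (.term X u U)) (h2 : D (.term X u' U)) : Step Ax D (.termEq X u u' U)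
  | sSub {X : PreCtx A} {S : A.SortSym} (hax : introSort X S ∈ Ax)
      {Y : PreCtx A} (hY : IsPreCtx Y) {f : List (Expr A)} (hlen : f.length = X.length)
      (hJ : D (introSort X S)) (hYc : D (.ctx Y))
      (hargs : ∀ i (hi : i < X.length) (hif : i < f.length),
        D (.term Y (f[i]'hif) (subPre X f i hi))) :
      Step Ax D (.sort Y ⟨S, f⟩)
  | tSub {X : PreCtx A} {t : A.TermSym} {U : SortE A} (hax : introTerm X t U ∈ Ax)
      {Y : PreCtx A} (hY : IsPreCtx Y) {f : List (Expr A)} (hlen : f.length = X.length)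
      (hJ : D (introTerm X t U))
      (hU : D (.sort Y (U.substL (mkSub X f))))
      (hargs : ∀ i (hi : i < X.length) (hif : i < f.length),
        D (.term Y (f[i]'hif) (subPre X f i hi))) :
      Step Ax D (.term Y (.app t f) (U.substL (mkSub X f)))
  | seqSub1 {X : PreCtx A} {U U' : SortE A} (hax : Judg.sortEq X U U' ∈ Ax)
      {Y : PreCtx A} (hY : IsPreCtx Y) {f : List (Expr A)} (hlen : f.length = X.length)
      (hJ : D (.sortEq X U U'))
      (h1 : D (.sort Y (U.substL (mkSub X f)))) (h2 : D (.sort Y (U'.substL (mkSub X f))))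
      (hargs : ∀ i (hi : i < X.length) (hif : i < f.length),
        D (.term Y (f[i]'hif) (subPre X f i hi))) :
      Step Ax D (.sortEq Y (U.substL (mkSub X f)) (U'.substL (mkSub X f)))
  | seqSub2 {X : PreCtx A} {S : A.SortSym} (hax : introSort X S ∈ Ax)
      {Y : PreCtx A} (hY : IsPreCtx Y) {f g : List (Expr A)}
      (hlf : f.length = X.length) (hlg : g.length = X.length)
      (hJ : D (introSort X S))
      (h1 : D (.sort Y ⟨S, f⟩)) (h2 : D (.sort Y ⟨S, g⟩))
      (hargs : ∀ i (hi : i < X.length) (hif : i < f.length) (hig : i < g.length),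
        D (.termEq Y (f[i]'hif) (g[i]'hig) (subPre X f i hi))) :
      Step Ax D (.sortEq Y ⟨S, f⟩ ⟨S, g⟩)
  | teqSub1 {X : PreCtx A} {u u' : Expr A} {U : SortE A}
      (hax : Judg.termEq X u u' U ∈ Ax)
      {Y : PreCtx A} (hY : IsPreCtx Y) {f : List (Expr A)} (hlen : f.length = X.length)
      (hJ : D (.termEq X u u' U))
      (h1 : D (.term Y (u.substL (mkSub X f)) (U.substL (mkSub X f))))
      (h2 : D (.term Y (u'.substL (mkSub X f)) (U.substL (mkSub X f))))
      (hargs : ∀ i (hi : i < X.length) (hif : i < f.length),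
        D (.term Y (f[i]'hif) (subPre X f i hi))) :
      Step Ax D (.termEq Y (u.substL (mkSub X f)) (u'.substL (mkSub X f))
        (U.substL (mkSub X f)))
  | teqSub2 {X : PreCtx A} {t : A.TermSym} {U : SortE A} (hax : introTerm X t U ∈ Ax)
      {Y : PreCtx A} (hY : IsPreCtx Y) {f g : List (Expr A)}
      (hlf : f.length = X.length) (hlg : g.length = X.length)
      (hJ : D (introTerm X t U))
      (h1 : D (.term Y (.app t f) (U.substL (mkSub X f))))
      (h2 : D (.term Y (.app t g) (U.substL (mkSub X f))))
      (hargs : ∀ i (hi : i < X.length) (hif : i < f.length) (hig : i < g.length),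
        D (.termEq Y (f[i]'hif) (g[i]'hig) (subPre X f i hi))) :
      Step Ax D (.termEq Y (.app t f) (.app t g) (U.substL (mkSub X f)))

/-- `DerAt Ax n J`: `J` is the conclusion of an inference step in the `n`-th stage
`𝒟ₙ` of the recursive construction of the derivable judgments. -/
def DerAt (Ax : Set (Judg A)) : ℕ → Judg A → Prop
  | 0, _ => False
  | n + 1, J => DerAt Ax n J ∨ Step Ax (DerAt Ax n) J

/-- A judgment is derivable if it is the conclusion of a step of some stage. -/
def Derivable (Ax : Set (Judg A)) (J : Judg A) : Prop := ∃ n, DerAt Ax n J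

/-- The height of a (derivable) judgment: the least stage at which it appears. -/
noncomputable def ht (Ax : Set (Judg A)) (J : Judg A) : ℕ := sInf {n | DerAt Ax n J}

/-- The height of a context: `0` for the empty context, and the height of
`∂X ⊢ Xₙ sort` otherwise. -/
noncomputable def htCtx (Ax : Set (Judg A)) (X : PreCtx A) : ℕ :=
  match X with
  | [] => 0
  | p :: X' =>
      ht Ax (.sort ((p :: X').dropLast) (((p :: X').getLast (List.cons_ne_nil p X')).2))

/-- A generalized algebraic theory: a pretheory all of whose axioms are derivable. -/
def IsGAT (Ax : Set (Judg A)) : Prop := IsPretheory Ax ∧ ∀ J ∈ Ax, Derivable Ax J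

/-- The partial term judgment `X ⊢ u term` is derivable. -/
def DerTerm (Ax : Set (Judg A)) (X : PreCtx A) (u : Expr A) : Prop :=
  ∃ U, Derivable Ax (.term X u U)

/-- The partial term equality judgment `X ⊢ u ≡ v term` is derivable. -/
def DerTermEq (Ax : Set (Judg A)) (X : PreCtx A) (u v : Expr A) : Prop :=
  ∃ U, Derivable Ax (.termEq X u v U)

/-- Height of a derivable partial term judgment: the minimum of the heights of
`X ⊢ u : U` over all `U`. -/
noncomputable def htTerm (Ax : Set (Judg A)) (X : PreCtx A) (u : Expr A) : ℕ :=
  sInf {n | ∃ U, DerAt Ax n (.term X u U)}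

/-- `f` is a context morphism from `X` to `Y`. -/
def IsMor (Ax : Set (Judg A)) (X Y : PreCtx A) (f : List (Expr A)) : Prop :=
  Derivable Ax (.ctx X) ∧ Derivable Ax (.ctx Y) ∧ f.length = Y.length ∧
  ∀ i (hi : i < Y.length) (hif : i < f.length),
    Derivable Ax (.term X (f[i]'hif) (subPre Y f i hi))

/-- The morphism equality `f ≡ g : X → Y` is derivable. -/
def MorEq (Ax : Set (Judg A)) (X Y : PreCtx A) (f g : List (Expr A)) : Prop :=
  IsMor Ax X Y f ∧ IsMor Ax X Y g ∧
  ∀ i (hi : i < Y.length) (hif : i < f.length) (hig : i < g.length),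
    Derivable Ax (.termEq X (f[i]'hif) (g[i]'hig) (subPre Y f i hi))

/-- The context equality `X ≡ Y ctx` is derivable. -/
def CtxEq (Ax : Set (Judg A)) (X Y : PreCtx A) : Prop :=
  X.length = Y.length ∧ Derivable Ax (.ctx X) ∧ Derivable Ax (.ctx Y) ∧
  ∀ i (hX : i < X.length) (hY : i < Y.length),
    Derivable Ax (.sortEq (X.take i) (X[i]'hX).2
      (((Y[i]'hY).2).substL (mkSub (Y.take i) (ctxVars (X.take i)))))

/-- Height of a context morphism. -/
noncomputable def htMor (Ax : Set (Judg A)) (X Y : PreCtx A) (f : List (Expr A)) : ℕ :=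
  max (htCtx Ax X) (max (htCtx Ax Y)
    ((Finset.range Y.length).sup fun i =>
      if h : i < Y.length ∧ i < f.length then
        ht Ax (.term X (f[i]'h.2) (subPre Y f i h.1))
      else 0))

/-- Height of a morphism equality. -/
noncomputable def htMorEq (Ax : Set (Judg A)) (X Y : PreCtx A) (f g : List (Expr A)) : ℕ :=
  max (htMor Ax X Y f) (max (htMor Ax X Y g)
    ((Finset.range Y.length).sup fun i =>
      if h : i < Y.length ∧ i < f.length ∧ i < g.length then
        ht Ax (.termEq X (f[i]'h.2.1) (g[i]'h.2.2) (subPre Y f i h.1))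
      else 0))

/-- The composite `g ∘ f` of tuples of term expressions, where `f : X → Y` and
`g : Y → Z`: the `i`-th entry is `gᵢ[f]`. -/
noncomputable def compMor (Y : PreCtx A) (f g : List (Expr A)) : List (Expr A) :=
  g.map fun e => e.substL (mkSub Y f)

/-- The canonical sort `𝒮(u)` of a term in a context (as a relation). -/
inductive CanonSort (Ax : Set (Judg A)) (X : PreCtx A) : Expr A → SortE A → Prop where
  | var {i : ℕ} (hi : i < X.length) : CanonSort Ax X (.var (X[i]'hi).1) (X[i]'hi).2
  | app {t : A.TermSym} {f : List (Expr A)} {Xa : PreCtx A} {V : SortE A}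
      (hax : introTerm Xa t V ∈ Ax) :
      CanonSort Ax X (.app t f) (V.substL (mkSub Xa f))

/-! Derivable judgments are closed under substitution along a context morphism `f : X → Y`,
by induction on the stage at which a judgment over `Y` is derived: an instance of a rule maps
to the same rule applied to the substituted premises, an axiom to the substitution rule for
that axiom, and an instance of a substitution rule along `g` to one along `g ∘ f`. The last
case needs `U[g][f] = U[g ∘ f]`, which holds because every derivable judgment is well scoped.
Substituting `f` into `Y ⊢ gᵢ : Zᵢ[g]` then gives `X ⊢ gᵢ[f] : Zᵢ[g ∘ f]`. -/

@[induction_eliminator]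
lemma Expr.induction_on_mem {P : Expr A → Prop} (var : ∀ x, P (.var x))
    (app : ∀ t es, (∀ e ∈ es, P e) → P (.app t es)) (e : Expr A) : P e := by
  induction e using Expr.subst.induct with
  | case1 x => exact var x
  | case2 t es ih => exact app t es fun e he => ih ⟨e, he⟩

@[simp] lemma Expr.subst_var (σ : A.Var → Expr A) (x : A.Var) :
    (Expr.var x).subst σ = σ x := by
  rw [Expr.subst]

@[simp] lemma Expr.subst_app (σ : A.Var → Expr A) (t : A.TermSym) (es : List (Expr A)) :
    (Expr.app t es).subst σ = .app t (es.map (Expr.subst σ)) := by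
  rw [Expr.subst, List.attach_map_val]

lemma Expr.subst_congr {σ τ : A.Var → Expr A} (e : Expr A)
    (h : ∀ z, Occurs z e → σ z = τ z) : e.subst σ = e.subst τ := by
  induction e with
  | var x => simpa using h x .var
  | app t es ih =>
    simp only [Expr.subst_app]
    exact congrArg _ (List.map_congr_left fun e he => ih e he fun z hz => h z (.app he hz))

lemma Expr.subst_subst (σ τ : A.Var → Expr A) (e : Expr A) :
    (e.subst σ).subst τ = e.subst fun z => (σ z).subst τ := by
  induction e with
  | var x => simp
  | app t es ih =>
    simp only [Expr.subst_app, List.map_map]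
    exact congrArg _ (List.map_congr_left ih)

lemma SortE.subst_congr {σ τ : A.Var → Expr A} (U : SortE A)
    (h : ∀ z, SOccurs z U → σ z = τ z) : U.subst σ = U.subst τ := by
  simp only [SortE.subst, SortE.mk.injEq, true_and]
  exact List.map_congr_left fun e he => e.subst_congr fun z hz => h z ⟨e, he, hz⟩

@[simp] lemma Expr.substL_var (x : A.Var) (ps : List (A.Var × Expr A)) :
    (Expr.var x).substL ps = lookupV ps x :=
  Expr.subst_var _ x

@[simp] lemma Expr.substL_app (t : A.TermSym) (es : List (Expr A))
    (ps : List (A.Var × Expr A)) :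
    (Expr.app t es).substL ps = .app t (es.map (·.substL ps)) :=
  Expr.subst_app _ t es

@[simp] lemma SortE.substL_mk (S : A.SortSym) (args : List (Expr A))
    (ps : List (A.Var × Expr A)) :
    (SortE.mk S args).substL ps = ⟨S, args.map (·.substL ps)⟩ := rfl

lemma occurs_var_iff {v x : A.Var} : Occurs v (Expr.var x) ↔ v = x :=
  ⟨fun h => by cases h; rfl, fun h => h ▸ .var⟩

lemma occurs_app_iff {v : A.Var} {t : A.TermSym} {es : List (Expr A)} :
    Occurs v (Expr.app t es) ↔ ∃ e ∈ es, Occurs v e :=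
  ⟨fun | .app he ho => ⟨_, he, ho⟩, fun ⟨_, he, ho⟩ => .app he ho⟩

lemma lookupV_zip_getElem {ks : List A.Var} {us : List (Expr A)} (hnd : ks.Nodup)
    {i : ℕ} (hik : i < ks.length) (hiu : i < us.length) :
    lookupV (ks.zip us) ks[i] = us[i] := by
  induction ks generalizing us i with
  | nil => simp at hik
  | cons k ks ih =>
    obtain ⟨hk, hnd⟩ := List.nodup_cons.mp hnd
    cases us with
    | nil => simp at hiu
    | cons u us =>
      cases i with
      | zero => simp [lookupV]
      | succ i =>
        have hik' : i < ks.length := by simpa using hik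
        have hne : k ≠ ks[i] := fun h => hk (h ▸ List.getElem_mem _)
        simpa [lookupV, hne] using ih hnd hik' (by simpa using hiu)

lemma lookupV_take_zip_take {ks : List A.Var} {us : List (Expr A)} {i : ℕ} {z : A.Var}
    (hz : z ∈ ks.take i) :
    lookupV ((ks.take i).zip (us.take i)) z = lookupV (ks.zip us) z := by
  induction ks generalizing us i with
  | nil => simp at hz
  | cons k ks ih =>
    cases i with
    | zero => simp at hz
    | succ i =>
      cases us with
      | nil => simp
      | cons u us =>
        simp only [List.take_succ_cons, List.zip_cons_cons, lookupV] at hz ⊢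
        by_cases hk : k = z
        · simp [hk]
        · simp only [hk, if_false]
          exact ih ((List.mem_cons.mp hz).resolve_left (Ne.symm hk))

lemma lookupV_zip_map_subst {ks : List A.Var} {us : List (Expr A)} (σ : A.Var → Expr A)
    {z : A.Var} (hz : z ∈ ks) (hlen : ks.length ≤ us.length) :
    lookupV (ks.zip (us.map (·.subst σ))) z = (lookupV (ks.zip us) z).subst σ := by
  induction ks generalizing us with
  | nil => simp at hz
  | cons k ks ih =>
    cases us with
    | nil => simp at hlen
    | cons u us =>
      simp only [List.map_cons, List.zip_cons_cons, lookupV]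
      by_cases hk : k = z
      · simp [hk]
      · simp only [hk, if_false]
        exact ih ((List.mem_cons.mp hz).resolve_left (Ne.symm hk)) (by simpa using hlen)

def TermScoped (X : PreCtx A) (u : Expr A) : Prop :=
  ∀ v, Occurs v u → v ∈ X.map Prod.fst

def SortScoped (X : PreCtx A) (U : SortE A) : Prop :=
  ∀ v, SOccurs v U → v ∈ X.map Prod.fst

def IsScopedCtx (X : PreCtx A) : Prop := IsPreCtx X ∧ (X.map Prod.fst).Nodup

def Judg.Scoped : Judg A → Prop
  | .ctx X => IsScopedCtx X
  | .sort X U => IsScopedCtx X ∧ SortScoped X U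
  | .term X u U => IsScopedCtx X ∧ TermScoped X u ∧ SortScoped X U
  | .sortEq X U V => IsScopedCtx X ∧ SortScoped X U ∧ SortScoped X V
  | .termEq X u v U => IsScopedCtx X ∧ TermScoped X u ∧ TermScoped X v ∧ SortScoped X U

lemma substL_mkSub_eq_subPre {Y : PreCtx A} (hY : IsPreCtx Y) {i : ℕ} (hi : i < Y.length)
    (f : List (Expr A)) : Y[i].2.substL (mkSub Y f) = subPre Y f i hi := by
  refine (SortE.subst_congr _ fun z hz => ?_).symm
  have hz' : z ∈ (Y.map Prod.fst).take i := by simpa only [List.map_take] using hY i hi z hz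
  rw [mkSub, mkSub, List.map_take, lookupV_take_zip_take hz']

lemma lookupV_mkSub_getElem {Y : PreCtx A} (hnd : (Y.map Prod.fst).Nodup) {f : List (Expr A)}
    {i : ℕ} (hi : i < Y.length) (hif : i < f.length) : lookupV (mkSub Y f) Y[i].1 = f[i] := by
  have h := lookupV_zip_getElem (us := f) hnd (by simpa using hi) hif
  rwa [List.getElem_map] at h

lemma map_ctxVars_substL_mkSub {Y : PreCtx A} (hnd : (Y.map Prod.fst).Nodup)
    {f : List (Expr A)} (hlen : f.length = Y.length) :
    (ctxVars Y).map (·.substL (mkSub Y f)) = f := by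
  refine List.ext_getElem (by simp [ctxVars, hlen]) fun i h1 _ => ?_
  have hi : i < Y.length := by simpa [ctxVars] using h1
  simpa [ctxVars] using lookupV_mkSub_getElem hnd hi (by omega)

@[simp] lemma length_compMor (Y : PreCtx A) (f g : List (Expr A)) :
    (compMor Y f g).length = g.length :=
  List.length_map _

@[simp] lemma getElem_compMor (Y : PreCtx A) (f g : List (Expr A)) {i : ℕ}
    (hi : i < (compMor Y f g).length) :
    (compMor Y f g)[i] = (g[i]'(by simpa using hi)).substL (mkSub Y f) :=
  List.getElem_map _

lemma Expr.substL_mkSub_substL_mkSub {X Y : PreCtx A} {f g : List (Expr A)}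
    (hlen : X.length ≤ g.length) {u : Expr A} (hu : TermScoped X u) :
    (u.substL (mkSub X g)).substL (mkSub Y f) = u.substL (mkSub X (compMor Y f g)) := by
  rw [Expr.substL, Expr.substL, Expr.subst_subst]
  refine u.subst_congr fun z hz => ?_
  exact (lookupV_zip_map_subst _ (hu z hz) (by simpa using hlen)).symm

lemma SortE.substL_mkSub_substL_mkSub {X Y : PreCtx A} {f g : List (Expr A)}
    (hlen : X.length ≤ g.length) {U : SortE A} (hU : SortScoped X U) :
    (U.substL (mkSub X g)).substL (mkSub Y f) = U.substL (mkSub X (compMor Y f g)) := by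
  simp only [SortE.substL, SortE.subst, List.map_map, SortE.mk.injEq, true_and]
  exact List.map_congr_left fun e he =>
    Expr.substL_mkSub_substL_mkSub hlen fun z hz => hU z ⟨e, he, hz⟩

lemma subPre_substL_mkSub {Xa Y : PreCtx A} (hXa : IsPreCtx Xa) {f g : List (Expr A)}
    (hlen : Xa.length ≤ g.length) {i : ℕ} (hi : i < Xa.length) :
    (subPre Xa g i hi).substL (mkSub Y f) = subPre Xa (compMor Y f g) i hi := by
  rw [subPre, subPre, compMor, ← List.map_take]
  refine SortE.substL_mkSub_substL_mkSub (by simp; omega) fun z hz => ?_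
  simpa only [List.map_take] using hXa i hi z hz

section

variable {Ax : Set (Judg A)}

open Filter

lemma DerAt.mono {J : Judg A} {m n : ℕ} (hmn : m ≤ n) (h : DerAt Ax m J) : DerAt Ax n J := by
  induction n, hmn using Nat.le_induction with
  | base => exact h
  | succ n _ ih => exact .inl ih

lemma Derivable.eventually {J : Judg A} (h : Derivable Ax J) : ∀ᶠ n in atTop, DerAt Ax n J :=
  let ⟨m, hm⟩ := h
  eventually_atTop.2 ⟨m, fun _ hmn => hm.mono hmn⟩

lemma eventually_forall_lt {L : ℕ} {P : (i : ℕ) → i < L → ℕ → Prop}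
    (h : ∀ i hi, ∀ᶠ n in atTop, P i hi n) : ∀ᶠ n in atTop, ∀ i hi, P i hi n := by
  filter_upwards [eventually_all.2 fun i : Fin L => h i i.2] with n hn i hi
  exact hn ⟨i, hi⟩

/-- Every rule has finitely many premises, so derivable premises all appear by a common
stage. -/
theorem Derivable.of_step {J : Judg A} (h : Step Ax (Derivable Ax) J) : Derivable Ax J := by
  suffices ∀ᶠ n in atTop, Step Ax (DerAt Ax n) J from
    let ⟨n, hn⟩ := this.exists
    ⟨n + 1, .inr hn⟩
  cases h with
  | ctx_nil => exact .of_forall fun _ => .ctx_nil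
  | ctx_cons hs hfresh hpre =>
    filter_upwards [hs.eventually] with n hs using .ctx_cons hs hfresh hpre
  | s1 h => filter_upwards [h.eventually] with n h using .s1 h
  | s2 h => filter_upwards [h.eventually] with n h using .s2 h
  | s3 h1 h2 => filter_upwards [h1.eventually, h2.eventually] with n h1 h2 using .s3 h1 h2
  | t1 h => filter_upwards [h.eventually] with n h using .t1 h
  | t2 h => filter_upwards [h.eventually] with n h using .t2 h
  | t3 h1 h2 => filter_upwards [h1.eventually, h2.eventually] with n h1 h2 using .t3 h1 h2
  | seqt h1 h2 => filter_upwards [h1.eventually, h2.eventually] with n h1 h2 using .seqt h1 h2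
  | seqteq h1 h2 h3 h4 =>
    filter_upwards [h1.eventually, h2.eventually, h3.eventually, h4.eventually]
      with n h1 h2 h3 h4 using .seqteq h1 h2 h3 h4
  | var hi h => filter_upwards [h.eventually] with n h using .var hi h
  | sA hax h hv =>
    filter_upwards [h.eventually, eventually_forall_lt fun i hi => (hv i hi).eventually]
      with n h hv using .sA hax h hv
  | tA hax h hv =>
    filter_upwards [h.eventually, eventually_forall_lt fun i hi => (hv i hi).eventually]
      with n h hv using .tA hax h hv
  | seqA hax h1 h2 =>
    filter_upwards [h1.eventually, h2.eventually] with n h1 h2 using .seqA hax h1 h2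
  | teqA hax h1 h2 =>
    filter_upwards [h1.eventually, h2.eventually] with n h1 h2 using .teqA hax h1 h2
  | sSub hax hY hlen hJ hYc hargs =>
    filter_upwards [hJ.eventually, hYc.eventually, eventually_forall_lt fun i hi =>
      eventually_all.2 fun hif => (hargs i hi hif).eventually]
      with n hJ hYc hargs using .sSub hax hY hlen hJ hYc hargs
  | tSub hax hY hlen hJ hU hargs =>
    filter_upwards [hJ.eventually, hU.eventually, eventually_forall_lt fun i hi =>
      eventually_all.2 fun hif => (hargs i hi hif).eventually]
      with n hJ hU hargs using .tSub hax hY hlen hJ hU hargs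
  | seqSub1 hax hY hlen hJ h1 h2 hargs =>
    filter_upwards [hJ.eventually, h1.eventually, h2.eventually, eventually_forall_lt fun i hi =>
      eventually_all.2 fun hif => (hargs i hi hif).eventually]
      with n hJ h1 h2 hargs using .seqSub1 hax hY hlen hJ h1 h2 hargs
  | seqSub2 hax hY hlf hlg hJ h1 h2 hargs =>
    filter_upwards [hJ.eventually, h1.eventually, h2.eventually, eventually_forall_lt fun i hi =>
      eventually_all.2 fun hif => eventually_all.2 fun hig => (hargs i hi hif hig).eventually]
      with n hJ h1 h2 hargs using .seqSub2 hax hY hlf hlg hJ h1 h2 hargs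
  | teqSub1 hax hY hlen hJ h1 h2 hargs =>
    filter_upwards [hJ.eventually, h1.eventually, h2.eventually, eventually_forall_lt fun i hi =>
      eventually_all.2 fun hif => (hargs i hi hif).eventually]
      with n hJ h1 h2 hargs using .teqSub1 hax hY hlen hJ h1 h2 hargs
  | teqSub2 hax hY hlf hlg hJ h1 h2 hargs =>
    filter_upwards [hJ.eventually, h1.eventually, h2.eventually, eventually_forall_lt fun i hi =>
      eventually_all.2 fun hif => eventually_all.2 fun hig => (hargs i hi hif hig).eventually]
      with n hJ h1 h2 hargs using .teqSub2 hax hY hlf hlg hJ h1 h2 hargs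

lemma termScoped_app_ctxVars (X : PreCtx A) (t : A.TermSym) :
    TermScoped X (.app t (ctxVars X)) := by
  intro v hv
  obtain ⟨e, he, ho⟩ := occurs_app_iff.mp hv
  obtain ⟨p, hp, rfl⟩ := List.mem_map.mp he
  cases occurs_var_iff.mp ho
  exact List.mem_map_of_mem hp

lemma sortScoped_mk_ctxVars (X : PreCtx A) (S : A.SortSym) :
    SortScoped X ⟨S, ctxVars X⟩ := by
  rintro v ⟨e, he, ho⟩
  obtain ⟨p, hp, rfl⟩ := List.mem_map.mp he
  cases occurs_var_iff.mp ho
  exact List.mem_map_of_mem hp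

lemma isScopedCtx_append_singleton {X : PreCtx A} {U : SortE A} {x : A.Var}
    (hX : IsScopedCtx X) (hfresh : ∀ p ∈ X, p.1 ≠ x) (hpre : IsPreCtx (X ++ [(x, U)])) :
    IsScopedCtx (X ++ [(x, U)]) := by
  refine ⟨hpre, ?_⟩
  rw [List.map_append]
  refine hX.2.append (by simp) fun a ha ha' => ?_
  obtain ⟨p, hp, rfl⟩ := List.mem_map.mp ha
  exact hfresh p hp (List.mem_singleton.mp ha')

lemma Judg.Scoped.of_step (hAx : IsPretheory Ax) {D : Judg A → Prop}
    (hD : ∀ J, D J → J.Scoped) {J : Judg A} (h : Step Ax D J) : J.Scoped := by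
  cases h with
  | ctx_nil => exact ⟨fun i hi => absurd hi (by simp), by simp⟩
  | ctx_cons hs hfresh hpre => exact isScopedCtx_append_singleton (hD _ hs).1 hfresh hpre
  | s1 h => obtain ⟨c, hU⟩ := hD _ h; exact ⟨c, hU, hU⟩
  | s2 h => obtain ⟨c, h1, h2⟩ := hD _ h; exact ⟨c, h2, h1⟩
  | s3 h1 h2 => exact ⟨(hD _ h1).1, (hD _ h1).2.1, (hD _ h2).2.2⟩
  | t1 h => obtain ⟨c, hu, hU⟩ := hD _ h; exact ⟨c, hu, hu, hU⟩
  | t2 h => obtain ⟨c, h1, h2, hU⟩ := hD _ h; exact ⟨c, h2, h1, hU⟩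
  | t3 h1 h2 => exact ⟨(hD _ h1).1, (hD _ h1).2.1, (hD _ h2).2.2.1, (hD _ h1).2.2.2⟩
  | seqt h1 h2 => exact ⟨(hD _ h2).1, (hD _ h2).2.1, (hD _ h1).2.2⟩
  | seqteq h1 h2 h3 h4 => exact ⟨(hD _ h3).1, (hD _ h3).2.1, (hD _ h4).2.1, (hD _ h3).2.2⟩
  | var hi h =>
    refine ⟨(hD _ h).1, fun v hv => ?_, (hD _ h).2⟩
    cases occurs_var_iff.mp hv
    exact List.mem_map_of_mem (List.getElem_mem hi)
  | @sA X U hax h _ =>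
    obtain ⟨S, args⟩ := U
    obtain rfl : args = ctxVars X := hAx.sort_shape _ _ hax
    exact ⟨hD _ h, sortScoped_mk_ctxVars X S⟩
  | @tA X u U hax h _ =>
    obtain ⟨t, rfl⟩ := hAx.term_shape _ _ _ hax
    exact ⟨(hD _ h).1, termScoped_app_ctxVars X t, (hD _ h).2⟩
  | seqA _ h1 h2 => exact ⟨(hD _ h1).1, (hD _ h1).2, (hD _ h2).2⟩
  | teqA _ h1 h2 => exact ⟨(hD _ h1).1, (hD _ h1).2.1, (hD _ h2).2.1, (hD _ h1).2.2⟩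
  | sSub _ _ hlen _ hYc hargs =>
    refine ⟨hD _ hYc, ?_⟩
    rintro v ⟨e, he, ho⟩
    obtain ⟨i, hif, rfl⟩ := List.mem_iff_getElem.mp he
    exact (hD _ (hargs i (hlen ▸ hif) hif)).2.1 v ho
  | tSub _ _ _ _ hU hargs =>
    refine ⟨(hD _ hU).1, fun v hv => ?_, (hD _ hU).2⟩
    obtain ⟨e, he, ho⟩ := occurs_app_iff.mp hv
    obtain ⟨i, hif, rfl⟩ := List.mem_iff_getElem.mp he
    exact (hD _ (hargs i (by omega) hif)).2.1 v ho
  | seqSub1 _ _ _ _ h1 h2 _ => exact ⟨(hD _ h1).1, (hD _ h1).2, (hD _ h2).2⟩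
  | seqSub2 _ _ _ _ _ h1 h2 _ => exact ⟨(hD _ h1).1, (hD _ h1).2, (hD _ h2).2⟩
  | teqSub1 _ _ _ _ h1 h2 _ =>
    exact ⟨(hD _ h1).1, (hD _ h1).2.1, (hD _ h2).2.1, (hD _ h1).2.2⟩
  | teqSub2 _ _ _ _ _ h1 h2 _ =>
    exact ⟨(hD _ h1).1, (hD _ h1).2.1, (hD _ h2).2.1, (hD _ h1).2.2⟩

lemma DerAt.scoped (hAx : IsPretheory Ax) {n : ℕ} {J : Judg A} (h : DerAt Ax n J) :
    J.Scoped := by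
  induction n generalizing J with
  | zero => exact h.elim
  | succ n ih => exact h.elim ih (Judg.Scoped.of_step hAx fun _ => ih)

lemma Derivable.scoped (hAx : IsPretheory Ax) {J : Judg A} (h : Derivable Ax J) : J.Scoped :=
  let ⟨_, hn⟩ := h
  hn.scoped hAx

/-- A context judgment is sent to `X ctx`. -/
noncomputable def Judg.subst (X : PreCtx A) (f : List (Expr A)) : Judg A → Judg A
  | .ctx _ => .ctx X
  | .sort Y U => .sort X (U.substL (mkSub Y f))
  | .term Y u U => .term X (u.substL (mkSub Y f)) (U.substL (mkSub Y f))
  | .sortEq Y U V => .sortEq X (U.substL (mkSub Y f)) (V.substL (mkSub Y f))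
  | .termEq Y u v U =>
      .termEq X (u.substL (mkSub Y f)) (v.substL (mkSub Y f)) (U.substL (mkSub Y f))

lemma derivable_term_compMor {Xa X Y : PreCtx A} (hXa : IsPreCtx Xa) {f g : List (Expr A)}
    (hlen : g.length = Xa.length)
    (h : ∀ i (hi : i < Xa.length) (hig : i < g.length),
      Derivable Ax ((Judg.term Y g[i] (subPre Xa g i hi)).subst X f))
    (i : ℕ) (hi : i < Xa.length) (hi' : i < (compMor Y f g).length) :
    Derivable Ax (.term X (compMor Y f g)[i] (subPre Xa (compMor Y f g) i hi)) := by
  rw [getElem_compMor, ← subPre_substL_mkSub hXa hlen.ge]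
  exact h i hi _

lemma derivable_termEq_compMor {Xa X Y : PreCtx A} (hXa : IsPreCtx Xa) {f g g' : List (Expr A)}
    (hlen : g.length = Xa.length)
    (h : ∀ i (hi : i < Xa.length) (hig : i < g.length) (hig' : i < g'.length),
      Derivable Ax ((Judg.termEq Y g[i] g'[i] (subPre Xa g i hi)).subst X f))
    (i : ℕ) (hi : i < Xa.length) (hi₁ : i < (compMor Y f g).length)
    (hi₂ : i < (compMor Y f g').length) :
    Derivable Ax (.termEq X (compMor Y f g)[i] (compMor Y f g')[i]
      (subPre Xa (compMor Y f g) i hi)) := by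
  rw [getElem_compMor, getElem_compMor, ← subPre_substL_mkSub hXa hlen.ge]
  exact h i hi _ _

theorem Derivable.subst (hAx : IsPretheory Ax) {J : Judg A} (hJ : Derivable Ax J)
    {X : PreCtx A} {f : List (Expr A)} (hf : IsMor Ax X J.ctxOf f) :
    Derivable Ax (J.subst X f) := by
  revert hf
  obtain ⟨n, hn⟩ := hJ
  induction n generalizing J with
  | zero => exact hn.elim
  | succ n ih =>
  intro hf
  rcases hn with hn | hstep
  · exact ih hn hf
  have hJ : Derivable Ax J := ⟨n + 1, .inr hstep⟩
  have hX : IsPreCtx X := (hf.1.scoped hAx).1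
  obtain ⟨hXc, -, hflen, hfargs⟩ := id hf
  cases hstep with
  | ctx_nil => exact hXc
  | ctx_cons => exact hXc
  | s1 h => exact .of_step (.s1 (ih h hf))
  | s2 h => exact .of_step (.s2 (ih h hf))
  | s3 h1 h2 => exact .of_step (.s3 (ih h1 hf) (ih h2 hf))
  | t1 h => exact .of_step (.t1 (ih h hf))
  | t2 h => exact .of_step (.t2 (ih h hf))
  | t3 h1 h2 => exact .of_step (.t3 (ih h1 hf) (ih h2 hf))
  | seqt h1 h2 => exact .of_step (.seqt (ih h1 hf) (ih h2 hf))
  | seqteq h1 h2 h3 h4 => exact .of_step (.seqteq (ih h1 hf) (ih h2 hf) (ih h3 hf) (ih h4 hf))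
  | @var Y i hi h =>
    have hY := (h.scoped hAx).1
    simp only [Judg.subst, Expr.substL_var, lookupV_mkSub_getElem hY.2 hi (hflen ▸ hi),
      substL_mkSub_eq_subPre hY.1 hi]
    exact hfargs i hi _
  | @sA Y U hax h _ =>
    obtain ⟨S, args⟩ := U
    obtain rfl : args = ctxVars Y := hAx.sort_shape _ _ hax
    simp only [Judg.subst, SortE.substL_mk, map_ctxVars_substL_mkSub (h.scoped hAx).2 hflen]
    exact .of_step (.sSub hax hX hflen hJ hXc hfargs)
  | @tA Y u U hax h _ =>
    obtain ⟨t, rfl⟩ := hAx.term_shape _ _ _ hax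
    have hU := ih h hf
    simp only [Judg.subst, Expr.substL_app,
      map_ctxVars_substL_mkSub (h.scoped hAx).1.2 hflen] at hU ⊢
    exact .of_step (.tSub hax hX hflen hJ hU hfargs)
  | seqA hax h1 h2 => exact .of_step (.seqSub1 hax hX hflen hJ (ih h1 hf) (ih h2 hf) hfargs)
  | teqA hax h1 h2 => exact .of_step (.teqSub1 hax hX hflen hJ (ih h1 hf) (ih h2 hf) hfargs)
  | @sSub Xa S hax Y _ g hlen hJ' _ hargs =>
    exact .of_step (.sSub hax hX (by simpa using hlen) ⟨n, hJ'⟩ hXc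
      (derivable_term_compMor (hAx.wf_ctx _ hax) hlen fun i hi hig => ih (hargs i hi hig) hf))
  | @tSub Xa t U hax Y _ g hlen hJ' hU hargs =>
    have hUsc := (hJ'.scoped hAx).2.2
    have hU' := ih hU hf
    simp only [Judg.subst, Expr.substL_app,
      SortE.substL_mkSub_substL_mkSub hlen.ge hUsc] at hU' ⊢
    exact .of_step (.tSub hax hX (by simpa using hlen) ⟨n, hJ'⟩ hU'
      (derivable_term_compMor (hAx.wf_ctx _ hax) hlen fun i hi hig => ih (hargs i hi hig) hf))
  | @seqSub1 Xa U U' hax Y _ g hlen hJ' h1 h2 hargs =>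
    obtain ⟨-, hUsc, hU'sc⟩ := hJ'.scoped hAx
    have h1' := ih h1 hf
    have h2' := ih h2 hf
    simp only [Judg.subst, SortE.substL_mkSub_substL_mkSub hlen.ge hUsc,
      SortE.substL_mkSub_substL_mkSub hlen.ge hU'sc] at h1' h2' ⊢
    exact .of_step (.seqSub1 hax hX (by simpa using hlen) ⟨n, hJ'⟩ h1' h2'
      (derivable_term_compMor (hAx.wf_ctx _ hax) hlen fun i hi hig => ih (hargs i hi hig) hf))
  | @seqSub2 Xa S hax Y _ g g' hlen hlen' hJ' h1 h2 hargs =>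
    exact .of_step (.seqSub2 hax hX (by simpa using hlen) (by simpa using hlen') ⟨n, hJ'⟩
      (ih h1 hf) (ih h2 hf) (derivable_termEq_compMor (hAx.wf_ctx _ hax) hlen
        fun i hi hig hig' => ih (hargs i hi hig hig') hf))
  | @teqSub1 Xa u u' U hax Y _ g hlen hJ' h1 h2 hargs =>
    obtain ⟨-, husc, hu'sc, hUsc⟩ := hJ'.scoped hAx
    have h1' := ih h1 hf
    have h2' := ih h2 hf
    simp only [Judg.subst, Expr.substL_mkSub_substL_mkSub hlen.ge husc,
      Expr.substL_mkSub_substL_mkSub hlen.ge hu'sc,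
      SortE.substL_mkSub_substL_mkSub hlen.ge hUsc] at h1' h2' ⊢
    exact .of_step (.teqSub1 hax hX (by simpa using hlen) ⟨n, hJ'⟩ h1' h2'
      (derivable_term_compMor (hAx.wf_ctx _ hax) hlen fun i hi hig => ih (hargs i hi hig) hf))
  | @teqSub2 Xa t U hax Y _ g g' hlen hlen' hJ' h1 h2 hargs =>
    have hUsc := (hJ'.scoped hAx).2.2
    have h1' := ih h1 hf
    have h2' := ih h2 hf
    simp only [Judg.subst, Expr.substL_app,
      SortE.substL_mkSub_substL_mkSub hlen.ge hUsc] at h1' h2' ⊢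
    exact .of_step (.teqSub2 hax hX (by simpa using hlen) (by simpa using hlen') ⟨n, hJ'⟩
      h1' h2' (derivable_termEq_compMor (hAx.wf_ctx _ hax) hlen
        fun i hi hig hig' => ih (hargs i hi hig hig') hf))

end

/-- In a pretheory, the composite `g ∘ f` of context morphisms
`f : X → Y` and `g : Y → Z` (with `i`-th entry `gᵢ[f]`) is a context morphism
from `X` to `Z`. -/
theorem composite_is_morphism (A : Alphabet) (Ax : Set (Judg A)) (hAx : IsPretheory Ax)
    (X Y Z : PreCtx A) (f g : List (Expr A))
    (hf : IsMor Ax X Y f) (hg : IsMor Ax Y Z g) :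
    IsMor Ax X Z (compMor Y f g) := by
  obtain ⟨-, hZc, hglen, hgargs⟩ := hg
  refine ⟨hf.1, hZc, by simpa using hglen, ?_⟩
  exact derivable_term_compMor (hZc.scoped hAx).1 hglen fun i hi hig =>
    (hgargs i hi hig).subst hAx hf

end GATPaper
end

section
/- Let 𝕋 be a pretheory. (a) Every derivable judgment has height at least 1, the empty precontext is the only context of height 0, and the empty tuple () : ∅ → ∅ is the only context morphism of height 0. (b) If X ⊢ U sort is derivable then ht(X ⊢ U sort) > ht(X); consequently for a context X of length n and 0 ≤ i < n, ht(∂ᵢX) < ht(X). (c) If X ⊢ U ≡ U' sort is derivable then X ⊢ U sort and X ⊢ U' sort are derivable of strictly smaller height. (d) If X ⊢ u : U is derivable then X ⊢ U sort is derivable and ht(X ⊢ u:U) > ht(X ⊢ U sort). (e) If X ⊢ u ≡ u' : U is derivable then X ⊢ u:U and X ⊢ u':U are derivable of strictly smaller height. (f) If X ⊢ u : U is derivable then X ⊢ u : 𝒮(u) is derivable with ht(X ⊢ u:U) ≥ ht(X ⊢ u:𝒮(u)), this inequality being strict if and only if U ≠ 𝒮(u), and X ⊢ 𝒮(u) ≡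 U sort is derivable with ht(X ⊢ u:U) ≥ ht(X ⊢ 𝒮(u) ≡ U sort). (g) If X ⊢ u term is derivable then ht(X ⊢ u term) = ht(X ⊢ u:𝒮(u)). (h) If X ⊢ T(f₁,…,f_k) sort is derivable then ht(X ⊢ T(f₁,…,f_k) sort) > ht(X ⊢ fᵢ:𝒮(fᵢ)) for each i, and if it is not an axiom then also ht(X ⊢ T(f₁,…,f_k) sort) > ht((f₁,…,f_k) : X → A), where A ⊢ T(a₁,…,a_k) sort is the axiom introducing T. (i) If X ⊢ t(f₁,…,f_k) : U is derivable then ht(X ⊢ t(f₁,…,f_k):U) > ht(X ⊢ fᵢ term) for each i. (j) For a context morphism f = (f₁,…,fₙ) : X → Y, ht(f : X → Y) ≥ ht(X ⊢ fᵢ term) for each i, and for a derivable morphism equality f ≡ g : X → Y, ht(f ≡ g : X → Y) ≥ ht(f : X → Y) and ht(f ≡ g : X → Y) ≥ ht(g : X → Y). -/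
set_option linter.unusedVariables false

/-! # Syntax of generalized algebraic theories (following Cartmell / the paper's appendix) -/

namespace GATPaper

variable {A B : Alphabet}

/-!
Every rule's premises are derived at a strictly earlier stage than its conclusion, so inverting
the last rule of a derivation of minimal height bounds the heights of its premises. Where that
last rule is symmetry, transitivity or sort conversion, the wanted premise is reached by strong
induction on the height. A canonical sort is unique because the variables of a derivable context
are distinct and each term symbol has a single introducing axiom.
-/

section

variable {Ax : Set (Judg A)}

theorem derAt_mono : Monotone (DerAt Ax) :=
  monotone_nat_of_le_succ fun _ _ h => Or.inl h

theorem ht_le_of_derAt {n : ℕ} {J : Judg A} (h : DerAt Ax n J) : ht Ax J ≤ n :=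
  Nat.sInf_le h

theorem derAt_ht {J : Judg A} (h : Derivable Ax J) : DerAt Ax (ht Ax J) J :=
  Nat.sInf_mem h

theorem derAt_of_ht_le {n : ℕ} {J : Judg A} (h : Derivable Ax J) (hn : ht Ax J ≤ n) :
    DerAt Ax n J :=
  derAt_mono hn _ (derAt_ht h)

theorem exists_step_of_derivable {J : Judg A} (h : Derivable Ax J) :
    ∃ k, ht Ax J = k + 1 ∧ Step Ax (DerAt Ax k) J := by
  have hJ := derAt_ht h
  rcases hk : ht Ax J with _ | k
  · rw [hk] at hJ
    exact hJ.elim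
  · rw [hk] at hJ
    refine ⟨k, rfl, hJ.resolve_left fun h' => ?_⟩
    have := ht_le_of_derAt h'
    omega

theorem one_le_ht {J : Judg A} (h : Derivable Ax J) : 1 ≤ ht Ax J := by
  obtain ⟨k, hk, -⟩ := exists_step_of_derivable h
  omega

theorem ht_lt_of_derAt {k : ℕ} {J J' : Judg A} (h : DerAt Ax k J') (hk : ht Ax J = k + 1) :
    ht Ax J' < ht Ax J := by
  have := ht_le_of_derAt h
  omega

theorem lookupV_of_forall_eq_var {ps : List (A.Var × Expr A)} (hps : ∀ p ∈ ps, p.2 = .var p.1)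
    (x : A.Var) : lookupV ps x = .var x := by
  induction ps with
  | nil => rfl
  | cons p ps ih =>
    rw [lookupV]
    split
    · next h => rw [hps p List.mem_cons_self, h]
    · exact ih fun q hq => hps q (List.mem_cons_of_mem p hq)

theorem Expr.subst_eq_self {σ : A.Var → Expr A} (hσ : ∀ x, σ x = .var x) :
    ∀ e : Expr A, e.subst σ = e
  | .var x => by rw [Expr.subst, hσ]
  | .app t es => by
    rw [Expr.subst]
    congr 1
    conv_rhs => rw [← List.attach_map_subtype_val es]
    refine List.map_congr_left fun e _ => ?_
    have := List.sizeOf_lt_of_mem e.2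
    exact Expr.subst_eq_self hσ e.1
termination_by e => sizeOf e
decreasing_by
  simp only [Expr.app.sizeOf_spec]
  omega

theorem SortE.substL_mkSub_ctxVars (U : SortE A) (X : PreCtx A) :
    U.substL (mkSub X (ctxVars X)) = U := by
  have hvar : ∀ p ∈ mkSub X (ctxVars X), p.2 = .var p.1 := by
    intro p hp
    rw [mkSub, ctxVars, List.zip_map'] at hp
    obtain ⟨q, -, rfl⟩ := List.mem_map.mp hp
    rfl
  obtain ⟨S, args⟩ := U
  simp only [SortE.substL, SortE.subst, SortE.mk.injEq, true_and]
  conv_rhs => rw [← List.map_id args]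
  exact List.map_congr_left fun e _ => Expr.subst_eq_self (lookupV_of_forall_eq_var hvar) e

theorem length_ctxVars (X : PreCtx A) : (ctxVars X).length = X.length :=
  List.length_map _

theorem getElem_ctxVars (X : PreCtx A) (i : ℕ) (hi : i < (ctxVars X).length) :
    (ctxVars X)[i] = .var (X[i]'(length_ctxVars X ▸ hi)).1 :=
  List.getElem_map _

theorem htCtx_append_singleton (X : PreCtx A) (x : A.Var) (U : SortE A) :
    htCtx Ax (X ++ [(x, U)]) = ht Ax (.sort X U) := by
  cases X with
  | nil => rfl
  | cons p X =>
    simp only [List.cons_append, htCtx]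
    simp only [← List.cons_append, List.dropLast_concat, List.getLast_concat]

theorem ctx_inversion {X : PreCtx A} (h : Derivable Ax (.ctx X)) :
    X = [] ∨ ∃ X' x U, X = X' ++ [(x, U)] ∧ (∀ p ∈ X', p.1 ≠ x) ∧
      Derivable Ax (.sort X' U) ∧ ht Ax (.sort X' U) < ht Ax (.ctx X) := by
  obtain ⟨k, hk, hs⟩ := exists_step_of_derivable h
  cases hs with
  | ctx_nil => exact Or.inl rfl
  | ctx_cons hU hfresh _ =>
    exact Or.inr ⟨_, _, _, rfl, hfresh, ⟨k, hU⟩, ht_lt_of_derAt hU hk⟩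

theorem ctx_of_sort {X : PreCtx A} {U : SortE A} (h : Derivable Ax (.sort X U)) :
    Derivable Ax (.ctx X) ∧ ht Ax (.ctx X) < ht Ax (.sort X U) := by
  obtain ⟨k, hk, hs⟩ := exists_step_of_derivable h
  cases hs with
  | sA _ hX _ => exact ⟨⟨k, hX⟩, ht_lt_of_derAt hX hk⟩
  | sSub _ _ _ _ hX _ => exact ⟨⟨k, hX⟩, ht_lt_of_derAt hX hk⟩

theorem htCtx_lt_ht_ctx {X : PreCtx A} (h : Derivable Ax (.ctx X)) :
    htCtx Ax X < ht Ax (.ctx X) := by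
  rcases ctx_inversion h with rfl | ⟨X', x, U, rfl, -, -, hlt⟩
  · exact one_le_ht h
  · rwa [htCtx_append_singleton]

theorem htCtx_lt_ht_sort {X : PreCtx A} {U : SortE A} (h : Derivable Ax (.sort X U)) :
    htCtx Ax X < ht Ax (.sort X U) :=
  (htCtx_lt_ht_ctx (ctx_of_sort h).1).trans (ctx_of_sort h).2

theorem htCtx_eq_zero_iff {X : PreCtx A} (h : Derivable Ax (.ctx X)) :
    htCtx Ax X = 0 ↔ X = [] := by
  refine ⟨fun h0 => ?_, fun hX => hX ▸ rfl⟩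
  rcases ctx_inversion h with hX | ⟨X', x, U, rfl, -, hU, -⟩
  · exact hX
  · rw [htCtx_append_singleton] at h0
    have := one_le_ht hU
    omega

theorem htCtx_take_lt {X : PreCtx A} (h : Derivable Ax (.ctx X)) {i : ℕ} (hi : i < X.length) :
    htCtx Ax (X.take i) < htCtx Ax X := by
  induction hn : X.length using Nat.strong_induction_on generalizing X with
  | _ n ih =>
  rcases ctx_inversion h with rfl | ⟨X', x, U, rfl, -, hU, -⟩
  · exact absurd hi (Nat.not_lt_zero i)
  rw [htCtx_append_singleton]
  simp only [List.length_append, List.length_singleton] at hi hn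
  rcases (Nat.lt_succ_iff.mp hi).lt_or_eq with hi' | rfl
  · rw [List.take_append_of_le_length hi'.le]
    exact (ih _ (by omega) (ctx_of_sort hU).1 hi' rfl).trans (htCtx_lt_ht_sort hU)
  · rw [List.take_left]
    exact htCtx_lt_ht_sort hU

theorem nodup_of_derivable_ctx {X : PreCtx A} (h : Derivable Ax (.ctx X)) :
    (X.map Prod.fst).Nodup := by
  induction hn : ht Ax (.ctx X) using Nat.strong_induction_on generalizing X with
  | _ n ih =>
  rcases ctx_inversion h with rfl | ⟨X', x, U, rfl, hfresh, hU, hlt⟩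
  · exact List.nodup_nil
  obtain ⟨hX', hlt'⟩ := ctx_of_sort hU
  rw [List.map_append, List.nodup_append]
  refine ⟨ih _ (by omega) hX' rfl, List.nodup_singleton x, ?_⟩
  rintro _ ha _ hb rfl
  obtain ⟨p, hp, rfl⟩ := List.mem_map.mp ha
  exact hfresh p hp (List.mem_singleton.mp hb)

theorem sortEq_inversion {X : PreCtx A} {U U' : SortE A} (h : Derivable Ax (.sortEq X U U')) :
    Derivable Ax (.sort X U) ∧ Derivable Ax (.sort X U') ∧
      ht Ax (.sort X U) < ht Ax (.sortEq X U U') ∧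
      ht Ax (.sort X U') < ht Ax (.sortEq X U U') := by
  induction hn : ht Ax (.sortEq X U U') using Nat.strong_induction_on generalizing U U' with
  | _ n ih =>
  obtain ⟨k, hk, hs⟩ := exists_step_of_derivable h
  subst hn
  have premises {V V' : SortE A} (h₁ : DerAt Ax k (.sort X V)) (h₂ : DerAt Ax k (.sort X V')) :
      Derivable Ax (.sort X V) ∧ Derivable Ax (.sort X V') ∧
        ht Ax (.sort X V) < k + 1 ∧ ht Ax (.sort X V') < k + 1 :=
    ⟨⟨k, h₁⟩, ⟨k, h₂⟩, Nat.lt_succ_of_le (ht_le_of_derAt h₁),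
      Nat.lt_succ_of_le (ht_le_of_derAt h₂)⟩
  rw [hk]
  cases hs with
  | s1 h₁ => exact premises h₁ h₁
  | seqA _ h₁ h₂ => exact premises h₁ h₂
  | seqSub1 _ _ _ _ h₁ h₂ _ => exact premises h₁ h₂
  | seqSub2 _ _ _ _ _ h₁ h₂ _ => exact premises h₁ h₂
  | s2 h₁ =>
    obtain ⟨d, d', l, l'⟩ := ih _ (hk ▸ ht_lt_of_derAt h₁ hk) ⟨k, h₁⟩ rfl
    have := ht_le_of_derAt h₁
    exact ⟨d', d, by omega, by omega⟩
  | s3 h₁ h₂ =>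
    obtain ⟨d, -, l, -⟩ := ih _ (hk ▸ ht_lt_of_derAt h₁ hk) ⟨k, h₁⟩ rfl
    obtain ⟨-, d', -, l'⟩ := ih _ (hk ▸ ht_lt_of_derAt h₂ hk) ⟨k, h₂⟩ rfl
    have := ht_le_of_derAt h₁
    have := ht_le_of_derAt h₂
    exact ⟨d, d', by omega, by omega⟩

theorem termEq_inversion {X : PreCtx A} {u u' : Expr A} {U : SortE A}
    (h : Derivable Ax (.termEq X u u' U)) :
    Derivable Ax (.term X u U) ∧ Derivable Ax (.term X u' U) ∧
      ht Ax (.term X u U) < ht Ax (.termEq X u u' U) ∧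
      ht Ax (.term X u' U) < ht Ax (.termEq X u u' U) := by
  induction hn : ht Ax (.termEq X u u' U) using Nat.strong_induction_on generalizing u u' U with
  | _ n ih =>
  obtain ⟨k, hk, hs⟩ := exists_step_of_derivable h
  subst hn
  have premises {v v' : Expr A} {V : SortE A} (h₁ : DerAt Ax k (.term X v V))
      (h₂ : DerAt Ax k (.term X v' V)) :
      Derivable Ax (.term X v V) ∧ Derivable Ax (.term X v' V) ∧
        ht Ax (.term X v V) < k + 1 ∧ ht Ax (.term X v' V) < k + 1 :=
    ⟨⟨k, h₁⟩, ⟨k, h₂⟩, Nat.lt_succ_of_le (ht_le_of_derAt h₁),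
      Nat.lt_succ_of_le (ht_le_of_derAt h₂)⟩
  rw [hk]
  cases hs with
  | t1 h₁ => exact premises h₁ h₁
  | seqteq _ _ h₁ h₂ => exact premises h₁ h₂
  | teqA _ h₁ h₂ => exact premises h₁ h₂
  | teqSub1 _ _ _ _ h₁ h₂ _ => exact premises h₁ h₂
  | teqSub2 _ _ _ _ _ h₁ h₂ _ => exact premises h₁ h₂
  | t2 h₁ =>
    obtain ⟨d, d', l, l'⟩ := ih _ (hk ▸ ht_lt_of_derAt h₁ hk) ⟨k, h₁⟩ rfl
    have := ht_le_of_derAt h₁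
    exact ⟨d', d, by omega, by omega⟩
  | t3 h₁ h₂ =>
    obtain ⟨d, -, l, -⟩ := ih _ (hk ▸ ht_lt_of_derAt h₁ hk) ⟨k, h₁⟩ rfl
    obtain ⟨-, d', -, l'⟩ := ih _ (hk ▸ ht_lt_of_derAt h₂ hk) ⟨k, h₂⟩ rfl
    have := ht_le_of_derAt h₁
    have := ht_le_of_derAt h₂
    exact ⟨d, d', by omega, by omega⟩

theorem term_inversion {X : PreCtx A} {u : Expr A} {U : SortE A}
    (h : Derivable Ax (.term X u U)) :
    Derivable Ax (.sort X U) ∧ ht Ax (.sort X U) < ht Ax (.term X u U) := by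
  obtain ⟨k, hk, hs⟩ := exists_step_of_derivable h
  cases hs with
  | var _ hU => exact ⟨⟨k, hU⟩, ht_lt_of_derAt hU hk⟩
  | tA _ hU _ => exact ⟨⟨k, hU⟩, ht_lt_of_derAt hU hk⟩
  | tSub _ _ _ _ hU _ => exact ⟨⟨k, hU⟩, ht_lt_of_derAt hU hk⟩
  | seqt hUU' _ =>
    obtain ⟨-, d, -, l⟩ := sortEq_inversion ⟨k, hUU'⟩
    exact ⟨d, l.trans (ht_lt_of_derAt hUU' hk)⟩

theorem CanonSort.unique (hAx : IsPretheory Ax) {X : PreCtx A}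
    (hX : (X.map Prod.fst).Nodup) {u : Expr A} {S S' : SortE A}
    (h : CanonSort Ax X u S) (h' : CanonSort Ax X u S') : S = S' := by
  cases h with
  | @var i hi =>
    generalize hx : Expr.var (X[i]'hi).1 = v at h'
    cases h' with
    | @var j hj =>
      have hij : j = i := (hX.getElem_inj_iff (i := j) (j := i) (hi := by simpa using hj)
        (hj := by simpa using hi)).mp (by simpa using (Expr.var.inj hx).symm)
      subst hij
      rfl
    | app => cases hx
  | app hax =>
    cases h' with
    | app hax' =>
      obtain ⟨_, -, huniq⟩ := hAx.term_intro _
      cases (huniq (_, _) hax).trans (huniq (_, _) hax').symm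
      rfl

theorem sortEq_refl_ht_le_ht_term {X : PreCtx A} {u : Expr A} {U : SortE A} {k : ℕ}
    (hk : ht Ax (.term X u U) = k + 1) (hU : DerAt Ax k (.sort X U)) :
    Derivable Ax (.sortEq X U U) ∧ ht Ax (.sortEq X U U) ≤ ht Ax (.term X u U) :=
  ⟨⟨k + 1, .inr (.s1 hU)⟩, hk ▸ ht_le_of_derAt (.inr (.s1 hU))⟩

theorem exists_canonSort_of_term (hAx : IsPretheory Ax) {X : PreCtx A} {u : Expr A}
    {U : SortE A} (h : Derivable Ax (.term X u U)) :
    ∃ S, CanonSort Ax X u S ∧ Derivable Ax (.term X u S) ∧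
      ht Ax (.term X u S) ≤ ht Ax (.term X u U) ∧
      (U ≠ S → ht Ax (.term X u S) < ht Ax (.term X u U)) ∧
      Derivable Ax (.sortEq X S U) ∧ ht Ax (.sortEq X S U) ≤ ht Ax (.term X u U) := by
  induction hn : ht Ax (.term X u U) using Nat.strong_induction_on generalizing U with
  | _ n ih =>
  obtain ⟨k, hk, hs⟩ := exists_step_of_derivable h
  subst hn
  cases hs with
  | var hi hU => exact ⟨_, .var hi, h, le_rfl, absurd rfl, sortEq_refl_ht_le_ht_term hk hU⟩
  | tA hax hU _ =>
    obtain ⟨t, rfl⟩ := hAx.term_shape _ _ _ hax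
    exact ⟨U, SortE.substL_mkSub_ctxVars U X ▸ .app hax, h, le_rfl, absurd rfl,
      sortEq_refl_ht_le_ht_term hk hU⟩
  | tSub hax _ _ _ hU _ =>
    exact ⟨_, .app hax, h, le_rfl, absurd rfl, sortEq_refl_ht_le_ht_term hk hU⟩
  | seqt hEq hu =>
    obtain ⟨S, hS, dS, leS, -, dSU, leSU⟩ := ih _ (hk ▸ ht_lt_of_derAt hu hk) ⟨k, hu⟩ rfl
    have hu' := ht_le_of_derAt hu
    have hstep : DerAt Ax (k + 1) (.sortEq X S U) :=
      .inr (.s3 (derAt_of_ht_le dSU (leSU.trans hu')) hEq)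
    exact ⟨S, hS, dS, by omega, fun _ => by omega, ⟨k + 1, hstep⟩,
      hk ▸ ht_le_of_derAt hstep⟩

theorem nodup_of_derivable_term {X : PreCtx A} {u : Expr A} {U : SortE A}
    (h : Derivable Ax (.term X u U)) : (X.map Prod.fst).Nodup :=
  nodup_of_derivable_ctx (ctx_of_sort (term_inversion h).1).1

theorem canonSort_of_term (hAx : IsPretheory Ax) {X : PreCtx A} {u : Expr A} {U S : SortE A}
    (h : Derivable Ax (.term X u U)) (hS : CanonSort Ax X u S) :
    Derivable Ax (.term X u S) ∧
      ht Ax (.term X u S) ≤ ht Ax (.term X u U) ∧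
      (ht Ax (.term X u S) < ht Ax (.term X u U) ↔ U ≠ S) ∧
      Derivable Ax (.sortEq X S U) ∧ ht Ax (.sortEq X S U) ≤ ht Ax (.term X u U) := by
  obtain ⟨S', hS', d, le, lt, hEq⟩ := exists_canonSort_of_term hAx h
  obtain rfl := hS'.unique hAx (nodup_of_derivable_term h) hS
  exact ⟨d, le, ⟨fun hlt hUS => (hUS ▸ hlt).false, lt⟩, hEq⟩

theorem htTerm_le_of_derAt {n : ℕ} {X : PreCtx A} {u : Expr A} {U : SortE A}
    (h : DerAt Ax n (.term X u U)) : htTerm Ax X u ≤ n :=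
  Nat.sInf_le ⟨U, h⟩

theorem htTerm_eq_ht_canonSort (hAx : IsPretheory Ax) {X : PreCtx A} {u : Expr A}
    (h : DerTerm Ax X u) {S : SortE A} (hS : CanonSort Ax X u S) :
    htTerm Ax X u = ht Ax (.term X u S) := by
  obtain ⟨U, hU⟩ := h
  obtain ⟨U', hU'⟩ :=
    Nat.sInf_mem (s := {n | ∃ U, DerAt Ax n (.term X u U)}) ⟨_, U, derAt_ht hU⟩
  apply le_antisymm
  · exact htTerm_le_of_derAt (derAt_ht (canonSort_of_term hAx hU hS).1)
  · exact (canonSort_of_term hAx ⟨_, hU'⟩ hS).2.1.trans (ht_le_of_derAt hU')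

theorem htTerm_arg_lt (hAx : IsPretheory Ax) {X : PreCtx A} {t : A.TermSym}
    {fs : List (Expr A)} {U : SortE A} (h : Derivable Ax (.term X (.app t fs) U))
    (i : ℕ) (hi : i < fs.length) : htTerm Ax X fs[i] < ht Ax (.term X (.app t fs) U) := by
  induction hn : ht Ax (.term X (.app t fs) U) using Nat.strong_induction_on generalizing U with
  | _ n ih =>
  obtain ⟨k, hk, hs⟩ := exists_step_of_derivable h
  subst hn
  rw [hk]
  cases hs with
  | seqt _ hu =>
    have := ih _ (hk ▸ ht_lt_of_derAt hu hk) ⟨k, hu⟩ rfl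
    have := ht_le_of_derAt hu
    omega
  | tA hax _ hv =>
    obtain ⟨_, hfs⟩ := hAx.term_shape _ _ _ hax
    cases hfs
    have hiX : i < X.length := length_ctxVars X ▸ hi
    rw [getElem_ctxVars]
    exact Nat.lt_succ_of_le (htTerm_le_of_derAt (hv i hiX))
  | tSub _ _ hlen _ _ hargs =>
    exact Nat.lt_succ_of_le (htTerm_le_of_derAt (hargs i (hlen ▸ hi) hi))

theorem ht_canonSort_arg_lt (hAx : IsPretheory Ax) {X : PreCtx A} {T : A.SortSym}
    {fs : List (Expr A)} (h : Derivable Ax (.sort X ⟨T, fs⟩)) (i : ℕ) (hi : i < fs.length)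
    {S : SortE A} (hS : CanonSort Ax X fs[i] S) :
    ht Ax (.term X fs[i] S) < ht Ax (.sort X ⟨T, fs⟩) := by
  obtain ⟨k, hk, hs⟩ := exists_step_of_derivable h
  rw [hk]
  cases hs with
  | sA hax hX hv =>
    have hfs : fs = ctxVars X := hAx.sort_shape X ⟨T, fs⟩ hax
    subst hfs
    have hiX : i < X.length := length_ctxVars X ▸ hi
    simp only [getElem_ctxVars] at hS ⊢
    obtain rfl := hS.unique hAx (nodup_of_derivable_ctx ⟨k, hX⟩) (.var hiX)
    exact Nat.lt_succ_of_le (ht_le_of_derAt (hv i hiX))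
  | sSub _ _ hlen _ _ hargs =>
    have hfi := hargs i (hlen ▸ hi) hi
    exact Nat.lt_succ_of_le
      ((canonSort_of_term hAx ⟨k, hfi⟩ hS).2.1.trans (ht_le_of_derAt hfi))

theorem htMor_le {X Y : PreCtx A} {f : List (Expr A)} {n : ℕ} (hX : htCtx Ax X ≤ n)
    (hY : htCtx Ax Y ≤ n)
    (hf : ∀ i (hi : i < Y.length) (hif : i < f.length),
      ht Ax (.term X f[i] (subPre Y f i hi)) ≤ n) :
    htMor Ax X Y f ≤ n := by
  refine max_le hX (max_le hY (Finset.sup_le fun i _ => ?_))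
  split
  · next hi => exact hf i hi.1 hi.2
  · exact Nat.zero_le n

theorem ht_term_le_htMor {X Y : PreCtx A} {f : List (Expr A)} {i : ℕ} (hi : i < Y.length)
    (hif : i < f.length) :
    ht Ax (.term X f[i] (subPre Y f i hi)) ≤ htMor Ax X Y f := by
  refine le_max_of_le_right (le_max_of_le_right ?_)
  have hsup := Finset.le_sup (f := fun j => if h : j < Y.length ∧ j < f.length then
    ht Ax (.term X f[j] (subPre Y f j h.1)) else 0) (Finset.mem_range.mpr hi)
  rwa [dif_pos (show i < Y.length ∧ i < f.length from ⟨hi, hif⟩)] at hsup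

theorem htTerm_le_htMor {X Y : PreCtx A} {f : List (Expr A)} (h : IsMor Ax X Y f) (i : ℕ)
    (hi : i < f.length) : htTerm Ax X f[i] ≤ htMor Ax X Y f := by
  have hiY : i < Y.length := h.2.2.1 ▸ hi
  exact (htTerm_le_of_derAt (derAt_ht (h.2.2.2 i hiY hi))).trans (ht_term_le_htMor hiY hi)

theorem htMor_eq_zero_iff {X Y : PreCtx A} {f : List (Expr A)} (h : IsMor Ax X Y f) :
    htMor Ax X Y f = 0 ↔ X = [] ∧ Y = [] ∧ f = [] := by
  obtain ⟨hX, hY, hlen, -⟩ := h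
  constructor
  · intro h0
    rw [htMor, Nat.max_eq_zero_iff, Nat.max_eq_zero_iff] at h0
    obtain rfl := (htCtx_eq_zero_iff hY).mp h0.2.1
    exact ⟨(htCtx_eq_zero_iff hX).mp h0.1, rfl, List.length_eq_zero_iff.mp hlen⟩
  · rintro ⟨rfl, rfl, rfl⟩
    exact Nat.le_zero.mp (htMor_le le_rfl le_rfl fun i hi => absurd hi (Nat.not_lt_zero i))

theorem htMor_lt_ht_sort (hAx : IsPretheory Ax) {X : PreCtx A} {T : A.SortSym}
    {fs : List (Expr A)} (h : Derivable Ax (.sort X ⟨T, fs⟩))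
    (hnax : Judg.sort X ⟨T, fs⟩ ∉ Ax)
    {Xa : PreCtx A} (hXa : introSort Xa T ∈ Ax) :
    htMor Ax X Xa fs < ht Ax (.sort X ⟨T, fs⟩) := by
  obtain ⟨k, hk, hs⟩ := exists_step_of_derivable h
  rw [hk]
  cases hs with
  | sA hax => exact absurd hax hnax
  | sSub hax _ _ hJ hX hargs =>
    obtain ⟨_, -, huniq⟩ := hAx.sort_intro T
    cases (huniq _ hXa).trans (huniq _ hax).symm
    refine Nat.lt_succ_of_le (htMor_le ?_ ?_ fun i hi hif => ht_le_of_derAt (hargs i hi hif))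
    · exact ((htCtx_lt_ht_ctx ⟨k, hX⟩).trans_le (ht_le_of_derAt hX)).le
    · exact ((htCtx_lt_ht_sort ⟨k, hJ⟩).trans_le (ht_le_of_derAt hJ)).le

end

/-- **properties of the height function.**
(a) every derivable judgment has height at least 1; the empty precontext is the
only context of height 0; the empty tuple `() : ∅ → ∅` is the only context
morphism of height 0.
(b) `ht(X ⊢ U sort) > ht(X)`, and truncating a context strictly decreases height.
(c), (d), (e): the constituents of a derivable (sort/term) (equality) judgment
are derivable of strictly smaller height.
(f) `X ⊢ u : 𝒮(u)` is derivable, with the stated height comparisons, and the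
inequality is strict iff `U ≠ 𝒮(u)`; also `X ⊢ 𝒮(u) ≡ U sort` is derivable
with `ht ≤ ht(X ⊢ u:U)`.
(g) `ht(X ⊢ u term) = ht(X ⊢ u : 𝒮(u))`.
(h) `ht(X ⊢ T(f₁,…,f_k) sort) > ht(X ⊢ fᵢ : 𝒮(fᵢ))`, and if the judgment is not
an axiom, also `ht > ht((f₁,…,f_k) : X → A)` for `A` the context of the axiom
introducing `T`.
(i) `ht(X ⊢ t(f₁,…,f_k) : U) > ht(X ⊢ fᵢ term)`.
(j) heights of the entries of a context morphism are at most the height of the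
morphism, and the heights of the two sides of a morphism equality are at most
its height. -/
theorem height_properties (A : Alphabet) (Ax : Set (Judg A)) (hAx : IsPretheory Ax) :
    -- (a)
    (∀ J : Judg A, Derivable Ax J → 1 ≤ ht Ax J) ∧
    (∀ X : PreCtx A, Derivable Ax (.ctx X) → (htCtx Ax X = 0 ↔ X = [])) ∧
    (∀ (X Y : PreCtx A) (f : List (Expr A)), IsMor Ax X Y f →
        (htMor Ax X Y f = 0 ↔ X = [] ∧ Y = [] ∧ f = [])) ∧
    -- (b)
    (∀ (X : PreCtx A) (U : SortE A), Derivable Ax (.sort X U) →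
        htCtx Ax X < ht Ax (.sort X U)) ∧
    (∀ X : PreCtx A, Derivable Ax (.ctx X) → ∀ i, i < X.length →
        htCtx Ax (X.take i) < htCtx Ax X) ∧
    -- (c)
    (∀ (X : PreCtx A) (U U' : SortE A), Derivable Ax (.sortEq X U U') →
        Derivable Ax (.sort X U) ∧ Derivable Ax (.sort X U') ∧
        ht Ax (.sort X U) < ht Ax (.sortEq X U U') ∧
        ht Ax (.sort X U') < ht Ax (.sortEq X U U')) ∧
    -- (d)
    (∀ (X : PreCtx A) (u : Expr A) (U : SortE A), Derivable Ax (.term X u U) →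
        Derivable Ax (.sort X U) ∧ ht Ax (.sort X U) < ht Ax (.term X u U)) ∧
    -- (e)
    (∀ (X : PreCtx A) (u u' : Expr A) (U : SortE A), Derivable Ax (.termEq X u u' U) →
        Derivable Ax (.term X u U) ∧ Derivable Ax (.term X u' U) ∧
        ht Ax (.term X u U) < ht Ax (.termEq X u u' U) ∧
        ht Ax (.term X u' U) < ht Ax (.termEq X u u' U)) ∧
    -- (f)
    (∀ (X : PreCtx A) (u : Expr A) (U : SortE A), Derivable Ax (.term X u U) →
        (∃ S, CanonSort Ax X u S) ∧
        ∀ S, CanonSort Ax X u S →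
          Derivable Ax (.term X u S) ∧
          ht Ax (.term X u S) ≤ ht Ax (.term X u U) ∧
          (ht Ax (.term X u S) < ht Ax (.term X u U) ↔ U ≠ S) ∧
          Derivable Ax (.sortEq X S U) ∧
          ht Ax (.sortEq X S U) ≤ ht Ax (.term X u U)) ∧
    -- (g)
    (∀ (X : PreCtx A) (u : Expr A), DerTerm Ax X u →
        ∀ S, CanonSort Ax X u S → htTerm Ax X u = ht Ax (.term X u S)) ∧
    -- (h)
    (∀ (X : PreCtx A) (T : A.SortSym) (fs : List (Expr A)),
        Derivable Ax (.sort X ⟨T, fs⟩) →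
        (∀ i (hi : i < fs.length), ∀ S, CanonSort Ax X (fs[i]'hi) S →
            ht Ax (.term X (fs[i]'hi) S) < ht Ax (.sort X ⟨T, fs⟩)) ∧
        (Judg.sort X ⟨T, fs⟩ ∉ Ax →
          ∀ Xa : PreCtx A, introSort Xa T ∈ Ax →
            htMor Ax X Xa fs < ht Ax (.sort X ⟨T, fs⟩))) ∧
    -- (i)
    (∀ (X : PreCtx A) (t : A.TermSym) (fs : List (Expr A)) (U : SortE A),
        Derivable Ax (.term X (.app t fs) U) →
        ∀ i (hi : i < fs.length),
          htTerm Ax X (fs[i]'hi) < ht Ax (.term X (.app t fs) U)) ∧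
    -- (j)
    (∀ (X Y : PreCtx A) (f : List (Expr A)), IsMor Ax X Y f →
        ∀ i (hi : i < f.length), htTerm Ax X (f[i]'hi) ≤ htMor Ax X Y f) ∧
    (∀ (X Y : PreCtx A) (f g : List (Expr A)), MorEq Ax X Y f g →
        htMor Ax X Y f ≤ htMorEq Ax X Y f g ∧
        htMor Ax X Y g ≤ htMorEq Ax X Y f g) := by
  refine ⟨fun _ => one_le_ht, fun _ => htCtx_eq_zero_iff, fun _ _ _ => htMor_eq_zero_iff,
    fun _ _ => htCtx_lt_ht_sort, fun _ h _ => htCtx_take_lt h, fun _ _ _ => sortEq_inversion,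
    fun _ _ _ => term_inversion, fun _ _ _ _ => termEq_inversion, fun _ _ _ h => ?_,
    fun _ _ h _ => htTerm_eq_ht_canonSort hAx h,
    fun _ _ _ h => ⟨ht_canonSort_arg_lt hAx h, fun hnax _ => htMor_lt_ht_sort hAx h hnax⟩,
    fun _ _ _ _ => htTerm_arg_lt hAx, fun _ _ _ => htTerm_le_htMor,
    fun _ _ _ _ _ => ⟨le_max_left _ _, le_max_of_le_right (le_max_left _ _)⟩⟩
  obtain ⟨S, hS, -⟩ := exists_canonSort_of_term hAx h
  exact ⟨⟨S, hS⟩, fun _ => canonSort_of_term hAx h⟩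

end GATPaper
end
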